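/- Let λ and λ' be set partitions of N = {1,…,n} with epl(λ) = epl(λ') and epr(λ) = epr(λ'). Then for every subset A ⊆ N, nst_A^λ = nst_A^{λ'}. -/

import Mathlib

/-- A set partition of `{1, …, n}` (modelled as `Fin n`), recorded as its set of arcs:
pairs `(i, j)` with `i < j` such that distinct arcs have distinct left endpoints and
distinct right endpoints. -/
def IsSP (n : ℕ) (lam : Finset (Fin n × Fin n)) : Prop :=
  (∀ p ∈ lam, p.1 < p.2) ∧ ∀ p ∈ lam, ∀ q ∈ lam, (p.1 = q.1 ↔ p.2 = q.2)

/-- The set of left endpoints. -/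
def epl {n : ℕ} (lam : Finset (Fin n × Fin n)) : Finset (Fin n) := lam.image Prod.fst

/-- The set of right endpoints. -/
def epr {n : ℕ} (lam : Finset (Fin n × Fin n)) : Finset (Fin n) := lam.image Prod.snd

/-- `nst_A^λ = #{((i,l), j) ∈ λ × A : i < j < l}`. -/
def nst {n : ℕ} (lam : Finset (Fin n × Fin n)) (A : Finset (Fin n)) : ℕ :=
  ((lam ×ˢ A).filter (fun x => x.1.1 < x.2 ∧ x.2 < x.1.2)).card

/-!
An arc `(i, l)` lies over `j` exactly when `i < j` and not `l ≤ j`. Since `i < l`, the arcs with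
`l ≤ j` are among those with `i < j`, and since arcs are determined by either endpoint, the number
of arcs over `j` is `#{left endpoints < j} - #{right endpoints ≤ j}`, which depends only on
`epl λ` and `epr λ`. Summing over `j ∈ A` gives `nst_A^λ`.
-/

open Finset

theorem Finset.card_filter_image_of_injOn {α β : Type*} [DecidableEq β] {s : Finset α}
    {f : α → β} (hf : Set.InjOn f s) (p : β → Prop) [DecidablePred p] :
    #((s.image f).filter p) = #(s.filter (fun a => p (f a))) := by
  rw [filter_image, card_image_of_injOn (hf.mono (coe_subset.mpr (filter_subset _ _)))]

namespace IsSP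

variable {n : ℕ} {lam : Finset (Fin n × Fin n)}

theorem injOn_fst (h : IsSP n lam) : Set.InjOn Prod.fst (lam : Set (Fin n × Fin n)) :=
  fun p hp q hq hpq => Prod.ext hpq ((h.2 p hp q hq).1 hpq)

theorem injOn_snd (h : IsSP n lam) : Set.InjOn Prod.snd (lam : Set (Fin n × Fin n)) :=
  fun p hp q hq hpq => Prod.ext ((h.2 p hp q hq).2 hpq) hpq

end IsSP

def arcsOver {n : ℕ} (lam : Finset (Fin n × Fin n)) (j : Fin n) : Finset (Fin n × Fin n) :=
  lam.filter (fun p => p.1 < j ∧ j < p.2)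

theorem nst_eq_sum_card_arcsOver {n : ℕ} (lam : Finset (Fin n × Fin n)) (A : Finset (Fin n)) :
    nst lam A = ∑ j ∈ A, #(arcsOver lam j) := by
  simp only [nst, arcsOver, card_filter, sum_product_right]

theorem IsSP.card_arcsOver_add_card_epr_le {n : ℕ} {lam : Finset (Fin n × Fin n)}
    (h : IsSP n lam) (j : Fin n) :
    #(arcsOver lam j) + #((epr lam).filter (· ≤ j)) = #((epl lam).filter (· < j)) := by
  rw [epl, epr, card_filter_image_of_injOn h.injOn_fst, card_filter_image_of_injOn h.injOn_snd,
    ← card_filter_add_card_filter_not (s := lam.filter (·.1 < j)) (p := fun p => j < p.2),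
    filter_filter, filter_filter, arcsOver]
  congr 2
  refine filter_congr fun p hp => ?_
  have := h.1 p hp
  constructor
  · intro hpj
    exact ⟨this.trans_le hpj, not_lt.mpr hpj⟩
  · exact fun hpj => not_lt.mp hpj.2

theorem stmt5 {n : ℕ} (lam lam' : Finset (Fin n × Fin n))
    (hlam : IsSP n lam) (hlam' : IsSP n lam')
    (hl : epl lam = epl lam') (hr : epr lam = epr lam') (A : Finset (Fin n)) :
    nst lam A = nst lam' A := by
  rw [nst_eq_sum_card_arcsOver, nst_eq_sum_card_arcsOver]
  refine sum_congr rfl fun j _ => ?_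
  have h := hlam.card_arcsOver_add_card_epr_le j
  have h' := hlam'.card_arcsOver_add_card_epr_le j
  rw [hl, hr] at h
  omega
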